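/- Let σ be an admissible measure on ℝ^d (symmetric probability measure with compact support, 0 ∉ supp σ). Define I_σ(A) = ∬ A(x) A(x+y) dσ(y) dx, identifying A with its indicator. If Z_δ(3/4)A is not σ-avoiding (i.e., there exist x₀, y₀ ∈ Z_δ(3/4)A with x₀ − y₀ ∈ supp σ), then I_σ(A) ≥ (δ^d/4)·σ(Q(y₀−x₀, δ/(8d))) > 0. -/

import Mathlib

open MeasureTheory

noncomputable section

/-- Open axis-parallel cube of side length r centered at x in ℝ^d. -/
def cube (d : ℕ) (x : EuclideanSpace ℝ (Fin d)) (r : ℝ) :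
    Set (EuclideanSpace ℝ (Fin d)) :=
  {y | ∀ i, |y i - x i| < r / 2}

/-- The zooming-out operator: Z_δ(ε)A = {x : |Q(x,δ) ∩ A| > ε·δ^d}. -/
def Zoom (d : ℕ) (δ ε : ℝ) (A : Set (EuclideanSpace ℝ (Fin d))) :
    Set (EuclideanSpace ℝ (Fin d)) :=
  {x | ENNReal.ofReal (ε * δ ^ d) < volume (cube d x δ ∩ A)}

/-- Support of a measure. -/
def msupp {d : ℕ} (σ : Measure (EuclideanSpace ℝ (Fin d))) :
    Set (EuclideanSpace ℝ (Fin d)) :=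
  {x | ∀ U : Set (EuclideanSpace ℝ (Fin d)), IsOpen U → x ∈ U → σ U ≠ 0}

/-- The saturation functional I_σ(A) = ∬ A(x)A(x+y) dσ(y) dx. -/
def Isat {d : ℕ} (σ : Measure (EuclideanSpace ℝ (Fin d)))
    (A : Set (EuclideanSpace ℝ (Fin d))) : ENNReal :=
  ∫⁻ x, ∫⁻ y, A.indicator (fun _ => (1 : ENNReal)) x *
    A.indicator (fun _ => (1 : ENNReal)) (x + y) ∂σ

/-! Two points of `Z_δ(3/4)A` see `A` in more than three quarters of their cubes, and shifting
the cube of `y₀` by less than `δ/(8d)` in each coordinate loses at most `δ^d/8` of its volume.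
Hence for every `v` near `y₀ - x₀` the sets `A ∩ Q(x₀, δ)` and `(A - v) ∩ Q(x₀, δ)` cover more than
`(3/4 + 5/8) δ^d` inside a cube of volume `δ^d`, so `|A ∩ (A - v)| ≥ 3δ^d/8`. Integrating over
`v ∈ Q(y₀ - x₀, δ/(8d))` bounds `I_σ(A)`, and this cube has positive `σ`-measure because
`supp σ` is symmetric. -/

section Cube

variable {d : ℕ}

lemma mem_cube_self (x : EuclideanSpace ℝ (Fin d)) {r : ℝ} (hr : 0 < r) : x ∈ cube d x r :=
  fun i => by simpa using half_pos hr

lemma cube_mono (x : EuclideanSpace ℝ (Fin d)) {r s : ℝ} (hrs : r ≤ s) :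
    cube d x r ⊆ cube d x s :=
  fun _ hy i => (hy i).trans_le (by linarith)

lemma cube_subset_cube_of_mem {x w : EuclideanSpace ℝ (Fin d)} {r t : ℝ} (hw : w ∈ cube d x t) :
    cube d x (r - t) ⊆ cube d w r := fun y hy i => by
  calc |y i - w i| ≤ |y i - x i| + |x i - w i| := abs_sub_le _ _ _
    _ < r / 2 := by linarith [hy i, abs_sub_comm (x i) (w i) ▸ hw i]

lemma preimage_add_right_cube (x v : EuclideanSpace ℝ (Fin d)) (r : ℝ) :
    (· + v) ⁻¹' cube d (x + v) r = cube d x r := by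
  ext y
  simp [cube]

lemma isOpen_cube (x : EuclideanSpace ℝ (Fin d)) (r : ℝ) : IsOpen (cube d x r) := by
  have : cube d x r = ⋂ i, (fun y : EuclideanSpace ℝ (Fin d) => y i) ⁻¹' {t | |t - x i| < r / 2} := by
    ext y; simp [cube]
  rw [this]
  exact isOpen_iInter_of_finite fun i =>
    (isOpen_lt (by fun_prop) continuous_const).preimage (EuclideanSpace.proj (𝕜 := ℝ) i).continuous

lemma measurableSet_cube (x : EuclideanSpace ℝ (Fin d)) (r : ℝ) : MeasurableSet (cube d x r) :=
  (isOpen_cube x r).measurableSet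

lemma cube_eq_preimage_pi_Ioo (x : EuclideanSpace ℝ (Fin d)) (r : ℝ) :
    cube d x r = (MeasurableEquiv.toLp 2 (Fin d → ℝ)).symm ⁻¹'
      Set.univ.pi fun i => Set.Ioo (x i - r / 2) (x i + r / 2) := by
  ext y
  simp only [cube, Set.mem_ofPred_eq, Set.mem_preimage, MeasurableEquiv.coe_toLp_symm,
    Set.mem_pi, Set.mem_univ, Set.mem_Ioo, true_implies, abs_sub_lt_iff]
  constructor <;> intro h i <;> constructor <;> linarith [(h i).1, (h i).2]

lemma volume_cube (x : EuclideanSpace ℝ (Fin d)) {r : ℝ} (hr : 0 ≤ r) :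
    volume (cube d x r) = ENNReal.ofReal (r ^ d) := by
  rw [cube_eq_preimage_pi_Ioo, (EuclideanSpace.volume_preserving_symm_measurableEquiv_toLp
    (Fin d)).measure_preimage (MeasurableSet.univ_pi fun _ => measurableSet_Ioo).nullMeasurableSet,
    volume_pi_pi]
  simp only [Real.volume_Ioo, add_sub_sub_cancel, add_halves, Finset.prod_const,
    Finset.card_univ, Fintype.card_fin, ENNReal.ofReal_pow hr]

lemma volume_cube_ne_top (x : EuclideanSpace ℝ (Fin d)) {r : ℝ} (hr : 0 ≤ r) :
    volume (cube d x r) ≠ ⊤ := by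
  simp [volume_cube x hr]

lemma volume_ne_top_of_subset_cube {s : Set (EuclideanSpace ℝ (Fin d))}
    {x : EuclideanSpace ℝ (Fin d)} {r : ℝ} (hr : 0 ≤ r) (hs : s ⊆ cube d x r) : volume s ≠ ⊤ :=
  measure_ne_top_of_subset hs (volume_cube_ne_top x hr)

lemma measureReal_cube (x : EuclideanSpace ℝ (Fin d)) {r : ℝ} (hr : 0 ≤ r) :
    volume.real (cube d x r) = r ^ d := by
  rw [measureReal_def, volume_cube x hr, ENNReal.toReal_ofReal (by positivity)]

lemma measureReal_cube_inter_preimage_add_right (A : Set (EuclideanSpace ℝ (Fin d)))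
    (x v : EuclideanSpace ℝ (Fin d)) (r : ℝ) :
    volume.real (cube d x r ∩ (· + v) ⁻¹' A) = volume.real (cube d (x + v) r ∩ A) := by
  rw [← preimage_add_right_cube x v, ← Set.preimage_inter, measureReal_def,
    measure_preimage_add_right, measureReal_def]

lemma measureReal_cube_diff_cube_le {x w : EuclideanSpace ℝ (Fin d)} {r t : ℝ}
    (ht : 0 ≤ t) (htr : t ≤ r) (hw : w ∈ cube d x t) :
    volume.real (cube d x r \ cube d w r) ≤ r ^ d - (r - t) ^ d := by
  have hr : 0 ≤ r := ht.trans htr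
  calc volume.real (cube d x r \ cube d w r) ≤ volume.real (cube d x r \ cube d x (r - t)) :=
        measureReal_mono (Set.sdiff_subset_sdiff_right (cube_subset_cube_of_mem hw))
          (measure_ne_top_of_subset Set.sdiff_subset (volume_cube_ne_top x hr))
    _ = r ^ d - (r - t) ^ d := by
      rw [measureReal_sdiff (cube_mono x (by linarith)) (measurableSet_cube _ _)
        (volume_cube_ne_top x hr), measureReal_cube x hr, measureReal_cube x (by linarith)]

end Cube

lemma pow_sub_pow_sub_div_le {d : ℕ} (hd : 0 < d) {δ : ℝ} (hδ : 0 ≤ δ) :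
    δ ^ d - (δ - δ / (8 * d)) ^ d ≤ δ ^ d / 8 := by
  have hd' : (1 : ℝ) ≤ d := Nat.one_le_cast.2 hd
  have bernoulli := one_add_mul_le_pow (a := -(1 / (8 * d) : ℝ))
    (by linarith [div_le_one_of_le₀ (by linarith : (1 : ℝ) ≤ 8 * d) (by positivity)]) d
  have : (δ - δ / (8 * d)) ^ d = δ ^ d * (1 + -(1 / (8 * d))) ^ d := by
    rw [← mul_pow]; ring_nf
  rw [this]
  have : (d : ℝ) * -(1 / (8 * d)) = -1 / 8 := by field_simp
  nlinarith [pow_nonneg hδ d]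

section Support

variable {d : ℕ} {σ : Measure (EuclideanSpace ℝ (Fin d))}

lemma neg_mem_msupp (hsymm : σ.map (fun x => -x) = σ) {x : EuclideanSpace ℝ (Fin d)}
    (hx : x ∈ msupp σ) : -x ∈ msupp σ := by
  intro U hU hxU
  rw [← hsymm, Measure.map_apply measurable_neg hU.measurableSet]
  exact hx _ (hU.preimage continuous_neg) (by simpa using hxU)

lemma measure_cube_ne_zero_of_mem_msupp {x : EuclideanSpace ℝ (Fin d)} (hx : x ∈ msupp σ)
    {r : ℝ} (hr : 0 < r) : σ (cube d x r) ≠ 0 :=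
  hx _ (isOpen_cube x r) (mem_cube_self x hr)

end Support

section Saturation

variable {d : ℕ} {A : Set (EuclideanSpace ℝ (Fin d))}

lemma Isat_eq_lintegral_volume_inter_preimage (σ : Measure (EuclideanSpace ℝ (Fin d)))
    [SFinite σ] (hA : MeasurableSet A) :
    Isat σ A = ∫⁻ y, volume (A ∩ (· + y) ⁻¹' A) ∂σ := by
  have hind : Measurable (A.indicator (fun _ => (1 : ENNReal))) := measurable_const.indicator hA
  rw [Isat, lintegral_lintegral_swap
    ((hind.comp measurable_fst).mul (hind.comp measurable_add)).aemeasurable]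
  congr 1 with y
  rw [← lintegral_indicator_one (hA.inter (hA.preimage (measurable_add_const y))),
    Set.inter_indicator_one]
  rfl

lemma mul_measure_le_Isat (σ : Measure (EuclideanSpace ℝ (Fin d))) [SFinite σ]
    (hA : MeasurableSet A) {S : Set (EuclideanSpace ℝ (Fin d))} (hS : MeasurableSet S) {c : ENNReal}
    (hc : ∀ y ∈ S, c ≤ volume (A ∩ (· + y) ⁻¹' A)) :
    c * σ S ≤ Isat σ A := by
  rw [Isat_eq_lintegral_volume_inter_preimage σ hA, ← lintegral_indicator_const hS]
  refine lintegral_mono fun y => ?_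
  by_cases hy : y ∈ S
  · simpa [hy] using hc y hy
  · simp [hy]

end Saturation

section Zoom

variable {d : ℕ} {A : Set (EuclideanSpace ℝ (Fin d))} {δ ε : ℝ}

lemma le_measureReal_of_mem_Zoom (hδ : 0 ≤ δ) {x : EuclideanSpace ℝ (Fin d)}
    (hx : x ∈ Zoom d δ ε A) : ε * δ ^ d ≤ volume.real (cube d x δ ∩ A) :=
  (ENNReal.ofReal_le_iff_le_toReal
    (measure_ne_top_of_subset Set.inter_subset_left (volume_cube_ne_top x hδ))).1 hx.le

lemma ofReal_le_volume_inter_preimage_add (hd : 0 < d) (hδ : 0 < δ) (hA : MeasurableSet A)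
    {x₀ y₀ v : EuclideanSpace ℝ (Fin d)} (hx₀ : x₀ ∈ Zoom d δ ε A) (hy₀ : y₀ ∈ Zoom d δ ε A)
    (hv : v ∈ cube d (y₀ - x₀) (δ / (8 * d))) :
    ENNReal.ofReal ((2 * ε - 9 / 8) * δ ^ d) ≤ volume (A ∩ (· + v) ⁻¹' A) := by
  set Q := cube d x₀ δ
  set S₁ := Q ∩ A
  set S₂ := Q ∩ (· + v) ⁻¹' A
  have hQ : volume Q ≠ ⊤ := volume_cube_ne_top x₀ hδ.le
  have hS₁ : volume S₁ ≠ ⊤ := volume_ne_top_of_subset_cube hδ.le Set.inter_subset_left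
  have hS₂ : volume S₂ ≠ ⊤ := volume_ne_top_of_subset_cube hδ.le Set.inter_subset_left
  have hw : x₀ + v ∈ cube d y₀ (δ / (8 * d)) := fun i => by
    simpa [sub_sub_eq_add_sub, add_comm] using hv i
  have hshift : volume.real (cube d y₀ δ ∩ A) ≤ volume.real S₂ + δ ^ d / 8 := by
    calc volume.real (cube d y₀ δ ∩ A)
        ≤ volume.real (cube d (x₀ + v) δ ∩ A ∪ cube d y₀ δ \ cube d (x₀ + v) δ) := by
          refine measureReal_mono (fun y ⟨hy, hyA⟩ => ?_) ?_
          · by_cases h : y ∈ cube d (x₀ + v) δ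
            exacts [Or.inl ⟨h, hyA⟩, Or.inr ⟨hy, h⟩]
          · exact measure_union_ne_top (volume_ne_top_of_subset_cube hδ.le Set.inter_subset_left)
              (volume_ne_top_of_subset_cube hδ.le Set.sdiff_subset)
      _ ≤ volume.real S₂ + δ ^ d / 8 := by
        refine (measureReal_union_le _ _).trans ?_
        rw [measureReal_cube_inter_preimage_add_right]
        linarith [measureReal_cube_diff_cube_le (by positivity)
          (div_le_self hδ.le (by norm_cast; omega)) hw,
          pow_sub_pow_sub_div_le hd hδ.le]
  have hunion : volume.real (S₁ ∪ S₂) ≤ volume.real Q :=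
    measureReal_mono (Set.union_subset Set.inter_subset_left Set.inter_subset_left) hQ
  have hincl_excl := measureReal_union_add_inter (μ := volume) (s := S₁)
    ((measurableSet_cube x₀ δ).inter (hA.preimage (measurable_add_const v))) hS₁ hS₂
  have hQ_real : volume.real Q = δ ^ d := measureReal_cube x₀ hδ.le
  have hS₁_real : ε * δ ^ d ≤ volume.real S₁ := le_measureReal_of_mem_Zoom hδ.le hx₀
  calc ENNReal.ofReal ((2 * ε - 9 / 8) * δ ^ d) ≤ volume (S₁ ∩ S₂) := by
        rw [ENNReal.ofReal_le_iff_le_toReal (measure_ne_top_of_subset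
          Set.inter_subset_left hS₁), ← measureReal_def]
        linarith [le_measureReal_of_mem_Zoom hδ.le hy₀]
    _ ≤ volume (A ∩ (· + v) ⁻¹' A) :=
      measure_mono fun _ ⟨⟨_, hA₁⟩, ⟨_, hA₂⟩⟩ => ⟨hA₁, hA₂⟩

end Zoom

theorem stmt13_general (d : ℕ) (hd : 0 < d) (σ : Measure (EuclideanSpace ℝ (Fin d)))
    [IsProbabilityMeasure σ]
    (hsymm : σ.map (fun x => -x) = σ)
    (A : Set (EuclideanSpace ℝ (Fin d))) (hA : MeasurableSet A)
    (δ : ℝ) (hδ : 0 < δ)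
    (x₀ y₀ : EuclideanSpace ℝ (Fin d))
    (hx₀ : x₀ ∈ Zoom d δ (3 / 4) A) (hy₀ : y₀ ∈ Zoom d δ (3 / 4) A)
    (hdiff : x₀ - y₀ ∈ msupp σ) :
    ENNReal.ofReal (δ ^ d / 4) * σ (cube d (y₀ - x₀) (δ / (8 * d))) ≤ Isat σ A ∧
      0 < ENNReal.ofReal (δ ^ d / 4) * σ (cube d (y₀ - x₀) (δ / (8 * d))) := by
  have hmem : y₀ - x₀ ∈ msupp σ := by simpa using neg_mem_msupp hsymm hdiff
  refine ⟨mul_measure_le_Isat σ hA (measurableSet_cube _ _) fun v hv => ?_, ?_⟩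
  · refine le_trans (ENNReal.ofReal_le_ofReal ?_)
      (ofReal_le_volume_inter_preimage_add hd hδ hA hx₀ hy₀ hv)
    linarith [pow_pos hδ d]
  · exact ENNReal.mul_pos (ENNReal.ofReal_pos.2 (by positivity)).ne'
      (measure_cube_ne_zero_of_mem_msupp hmem (by positivity))

/-- If Z_δ(3/4)A is not σ-avoiding, witnessed by x₀, y₀ ∈ Z_δ(3/4)A with
x₀ − y₀ ∈ supp σ, then I_σ(A) ≥ (δ^d/4)·σ(Q(y₀−x₀, δ/(8d))) > 0, for σ an
admissible (symmetric probability, compactly supported, 0 ∉ supp σ) measure. -/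
theorem stmt13 (d : ℕ) (hd : 0 < d) (σ : Measure (EuclideanSpace ℝ (Fin d)))
    [IsProbabilityMeasure σ]
    (hsymm : σ.map (fun x => -x) = σ)
    (hcpt : IsCompact (msupp σ))
    (h0 : (0 : EuclideanSpace ℝ (Fin d)) ∉ msupp σ)
    (A : Set (EuclideanSpace ℝ (Fin d))) (hA : MeasurableSet A)
    (δ : ℝ) (hδ : 0 < δ)
    (x₀ y₀ : EuclideanSpace ℝ (Fin d))
    (hx₀ : x₀ ∈ Zoom d δ (3 / 4) A) (hy₀ : y₀ ∈ Zoom d δ (3 / 4) A)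
    (hdiff : x₀ - y₀ ∈ msupp σ) :
    ENNReal.ofReal (δ ^ d / 4) * σ (cube d (y₀ - x₀) (δ / (8 * d))) ≤ Isat σ A ∧
      0 < ENNReal.ofReal (δ ^ d / 4) * σ (cube d (y₀ - x₀) (δ / (8 * d))) :=
  stmt13_general d hd σ hsymm A hA δ hδ x₀ y₀ hx₀ hy₀ hdiff

end
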